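/- Let μ ∈ (0, 1), α ∈ ℝ, β > 0 and N₀ > 0, and define N_μ(t) = N₀·E_μ((α/β^μ)·(1 − exp(−β·t))^μ) for t ≥ 0. Then N_μ(0) = N₀, N_μ is differentiable on (0, ∞), and for every t > 0 it satisfies the fractional Gompertz equation (1/Γ(1−μ))·∫_0^t ((exp(−β·τ) − exp(−β·t))/β)^{−μ}·N_μ'(τ) dτ = α·N_μ(t). -/

import Mathlib

/-!
With `y(τ) = 1 - exp (-β τ)` and `Y = y(t)`, the substitution `u = y(τ)` turns the integral into
`β ^ μ` times the Caputo integral `∫₀^Y (Y - u) ^ (-μ) F'(u) du` of `F(u) = E_μ(c u ^ μ)`,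
`c = α / β ^ μ`. Termwise, the Beta integral sends `u ^ p / Γ(p + 1)` to
`Γ(1 - μ) Y ^ (p - μ) / Γ(p - μ + 1)`, which shifts the Mittag-Leffler series by one index:
`F` is an eigenfunction with eigenvalue `c`. Summation and integration may be interchanged
because the same computation with `|c|` in place of `c` gives a convergent series.
-/

open MeasureTheory

/-- The Mittag-Leffler function of parameter `μ > 0`:
`E_μ(x) = ∑' k, x^k / Γ(μ·k + 1)`. -/
noncomputable def mittagLeffler (μ x : ℝ) : ℝ := ∑' k : ℕ, x ^ k / Real.Gamma (μ * k + 1)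

open Set Real

lemma Real.rpow_mul_exp_neg_le_Gamma_add_one {s p : ℝ} (hs : 0 ≤ s) (hp : 0 ≤ p) :
    s ^ p * exp (-(s + 1)) ≤ Gamma (p + 1) := by
  have hint : IntegrableOn (fun x ↦ exp (-x) * x ^ (p + 1 - 1)) (Ioi 0) :=
    GammaIntegral_convergent (by positivity)
  have hsub : Ioc s (s + 1) ⊆ Ioi 0 := fun x hx ↦ hs.trans_lt hx.1
  have hlower : ∀ x ∈ Ioc s (s + 1), s ^ p * exp (-(s + 1)) ≤ exp (-x) * x ^ (p + 1 - 1) := by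
    intro x hx
    rw [add_sub_cancel_right, mul_comm]
    gcongr
    · exact hx.2
    · exact hx.1.le
  calc s ^ p * exp (-(s + 1))
      = s ^ p * exp (-(s + 1)) * volume.real (Ioc s (s + 1)) := by simp
    _ ≤ ∫ x in Ioc s (s + 1), exp (-x) * x ^ (p + 1 - 1) :=
      setIntegral_ge_of_const_le_real measurableSet_Ioc (by simp) hlower (hint.mono_set hsub)
    _ ≤ ∫ x in Ioi 0, exp (-x) * x ^ (p + 1 - 1) :=
      setIntegral_mono_set hint
        (ae_restrict_of_forall_mem measurableSet_Ioi fun x hx ↦ by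
          have : 0 < x := hx
          positivity)
        hsub.eventuallyLE
    _ = Gamma (p + 1) := (Gamma_eq_integral (by positivity)).symm

lemma summable_pow_div_Gamma_mul_add_one {μ : ℝ} (hμ : 0 < μ) (x : ℝ) :
    Summable fun k : ℕ ↦ x ^ k / Gamma (μ * k + 1) := by
  refine .of_norm ?_
  set r := |x|
  -- choose `s ≥ 1` with `s ^ μ ≥ 2 r`; then the Gamma bound makes the terms `O(2⁻ᵏ)`
  set s := max 1 ((2 * r) ^ μ⁻¹)
  have hrs : 2 * r ≤ s ^ μ := by
    calc 2 * r = ((2 * r) ^ μ⁻¹) ^ μ := by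
          rw [← rpow_mul (by positivity), inv_mul_cancel₀ hμ.ne', rpow_one]
      _ ≤ s ^ μ := by gcongr; exact le_max_right _ _
  refine Summable.of_nonneg_of_le (fun k ↦ norm_nonneg _) (fun k ↦ ?_)
    ((summable_geometric_two).mul_left (exp (s + 1)))
  have hΓ := rpow_mul_exp_neg_le_Gamma_add_one (s := s) (p := μ * k)
    (by positivity) (by positivity)
  rw [rpow_mul (by positivity), rpow_natCast, exp_neg] at hΓ
  have hsμ : 0 < s ^ μ := by positivity
  rw [norm_div, norm_pow, Real.norm_eq_abs, Real.norm_eq_abs,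
    abs_of_pos (Gamma_pos_of_pos (by positivity))]
  calc r ^ k / Gamma (μ * k + 1) ≤ r ^ k / ((s ^ μ) ^ k * (exp (s + 1))⁻¹) := by gcongr
    _ = exp (s + 1) * (r / s ^ μ) ^ k := by rw [div_pow]; field_simp
    _ ≤ exp (s + 1) * (1 / 2) ^ k := by
      gcongr exp (s + 1) * ?_ ^ k
      rw [div_le_iff₀ hsμ]
      linarith

lemma summable_natCast_mul_pow_div_Gamma_mul_add_one {μ : ℝ} (hμ : 0 < μ) (x : ℝ) :
    Summable fun k : ℕ ↦ k * x ^ k / Gamma (μ * k + 1) := by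
  refine .of_norm_bounded (summable_pow_div_Gamma_mul_add_one hμ (2 * |x|)) fun k ↦ ?_
  have hΓ : 0 < Gamma (μ * k + 1) := Gamma_pos_of_pos (by positivity)
  have hk : (k : ℝ) ≤ 2 ^ k := mod_cast Nat.lt_two_pow_self.le
  rw [norm_div, norm_mul, norm_pow, Real.norm_eq_abs, Real.norm_eq_abs, Real.norm_eq_abs,
    abs_of_pos hΓ, Nat.abs_cast, mul_pow]
  gcongr

lemma Real.rpow_le_rpow_add_rpow {a b z : ℝ} (e : ℝ) (ha : 0 < a) (haz : a ≤ z)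
    (hzb : z ≤ b) :
    z ^ e ≤ a ^ e + b ^ e := by
  rcases le_total 0 e with he | he
  · exact (rpow_le_rpow (ha.le.trans haz) hzb he).trans (le_add_of_nonneg_left (by positivity))
  · exact (rpow_le_rpow_of_nonpos ha haz he).trans
      (le_add_of_nonneg_right (rpow_nonneg (ha.le.trans (haz.trans hzb)) e))

lemma mittagLeffler_zero (μ : ℝ) : mittagLeffler μ 0 = 1 := by
  rw [mittagLeffler, tsum_eq_single 0 fun k hk ↦ by simp [zero_pow hk]]
  simp

lemma mittagLeffler_mul_rpow (μ c : ℝ) {y : ℝ} (hy : 0 ≤ y) :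
    mittagLeffler μ (c * y ^ μ) = ∑' k : ℕ, c ^ k * y ^ (μ * k) / Gamma (μ * k + 1) := by
  simp only [mittagLeffler, mul_pow, ← rpow_natCast, ← rpow_mul hy]

lemma hasDerivAt_mittagLeffler_mul_rpow {μ : ℝ} (hμ : 0 < μ) (c : ℝ) {x : ℝ} (hx : 0 < x) :
    HasDerivAt (fun y ↦ mittagLeffler μ (c * y ^ μ))
      (∑' k : ℕ, c ^ k * (μ * k) * x ^ (μ * k - 1) / Gamma (μ * k + 1)) x := by
  have hΓ : ∀ k : ℕ, 0 < Gamma (μ * k + 1) := fun k ↦ Gamma_pos_of_pos (by positivity)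
  set a := x / 2
  set b := x + 1
  have ha : 0 < a := by positivity
  have hb : 0 < b := by positivity
  have hxab : x ∈ Ioo a b := ⟨half_lt_self hx, lt_add_one x⟩
  have rpow_eq (d : ℝ) (hd : 0 < d) (k : ℕ) : d ^ (μ * k - 1) = d⁻¹ * (d ^ μ) ^ k := by
    rw [rpow_sub hd, rpow_one, rpow_mul hd.le, rpow_natCast, div_eq_inv_mul]
  have hterm (k : ℕ) (y : ℝ) (hy : y ∈ Ioo a b) :
      HasDerivAt (fun z ↦ c ^ k * z ^ (μ * k) / Gamma (μ * k + 1))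
        (c ^ k * (μ * k) * y ^ (μ * k - 1) / Gamma (μ * k + 1)) y := by
    simpa [mul_assoc] using (((hasDerivAt_rpow_const (p := μ * k)
      (Or.inl (ha.trans hy.1).ne')).const_mul (c ^ k)).div_const (Gamma (μ * k + 1)))
  have hbound (k : ℕ) (y : ℝ) (hy : y ∈ Ioo a b) :
      ‖c ^ k * (μ * k) * y ^ (μ * k - 1) / Gamma (μ * k + 1)‖
        ≤ μ * a⁻¹ * (k * (|c| * a ^ μ) ^ k / Gamma (μ * k + 1))
          + μ * b⁻¹ * (k * (|c| * b ^ μ) ^ k / Gamma (μ * k + 1)) := by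
    have hy0 : 0 < y := ha.trans hy.1
    rw [Real.norm_eq_abs, abs_div, abs_mul, abs_mul, abs_pow, abs_of_pos (hΓ k),
      abs_of_nonneg (by positivity : (0 : ℝ) ≤ μ * k), abs_of_nonneg (rpow_nonneg hy0.le _)]
    calc |c| ^ k * (μ * k) * y ^ (μ * k - 1) / Gamma (μ * k + 1)
        ≤ |c| ^ k * (μ * k) * (a ^ (μ * k - 1) + b ^ (μ * k - 1)) / Gamma (μ * k + 1) := by
          gcongr
          exact rpow_le_rpow_add_rpow _ ha hy.1.le hy.2.le
      _ = _ := by rw [rpow_eq a ha, rpow_eq b hb]; ring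
  have hseries := hasDerivAt_tsum_of_isPreconnected
    (((summable_natCast_mul_pow_div_Gamma_mul_add_one hμ _).mul_left _).add
      ((summable_natCast_mul_pow_div_Gamma_mul_add_one hμ _).mul_left _))
    isOpen_Ioo isPreconnected_Ioo hterm hbound hxab
    ((summable_pow_div_Gamma_mul_add_one hμ (c * x ^ μ)).congr fun k ↦ by
      rw [mul_pow, ← rpow_natCast (x ^ μ), ← rpow_mul hx.le]) hxab
  refine hseries.congr_of_eventuallyEq ?_
  filter_upwards [Ioi_mem_nhds hx] with y hy
  exact mittagLeffler_mul_rpow μ c (le_of_lt hy)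

lemma integral_Ioo_rpow_mul_sub_rpow {p q Y : ℝ} (hp : 0 < p) (hq : 0 < q) (hY : 0 < Y) :
    ∫ u in Ioo 0 Y, u ^ (p - 1) * (Y - u) ^ (q - 1)
      = Y ^ (p + q - 1) * (Gamma p * Gamma q / Gamma (p + q)) := by
  have hcomplex : ((∫ u in Ioo 0 Y, u ^ (p - 1) * (Y - u) ^ (q - 1) : ℝ) : ℂ)
      = ∫ u in (0 : ℝ)..Y, (u : ℂ) ^ ((p : ℂ) - 1) * ((Y : ℂ) - u) ^ ((q : ℂ) - 1) := by
    rw [← integral_Ioc_eq_integral_Ioo, ← intervalIntegral.integral_of_le hY.le,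
      ← intervalIntegral.integral_ofReal]
    refine intervalIntegral.integral_congr fun u hu ↦ ?_
    rw [uIcc_of_le hY.le] at hu
    simp only [Complex.ofReal_mul]
    rw [Complex.ofReal_cpow hu.1, Complex.ofReal_cpow (sub_nonneg.2 hu.2)]
    push_cast
    rfl
  have hΓpq : Complex.Gamma (p + q) ≠ 0 := by
    rw [← Complex.ofReal_add, Complex.Gamma_ofReal]
    exact_mod_cast (Gamma_pos_of_pos (add_pos hp hq)).ne'
  have hB : Complex.betaIntegral p q = Complex.Gamma p * Complex.Gamma q / Complex.Gamma (p + q) :=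
    eq_div_of_mul_eq hΓpq (by
      rw [mul_comm,
        Complex.Gamma_mul_Gamma_eq_betaIntegral (by simpa using hp) (by simpa using hq)])
  rw [← Complex.ofReal_inj, hcomplex, Complex.betaIntegral_scaled _ _ hY, hB,
    Complex.ofReal_mul, Complex.ofReal_cpow hY.le]
  push_cast [← Complex.Gamma_ofReal]
  rfl

-- The integral is nonzero, and a non-integrable function has integral `0`.
lemma integrableOn_Ioo_rpow_mul_sub_rpow {p q Y : ℝ} (hp : 0 < p) (hq : 0 < q) (hY : 0 < Y) :
    IntegrableOn (fun u ↦ u ^ (p - 1) * (Y - u) ^ (q - 1)) (Ioo 0 Y) :=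
  Integrable.of_integral_ne_zero <| by
    rw [integral_Ioo_rpow_mul_sub_rpow hp hq hY]
    have := Gamma_pos_of_pos hp
    have := Gamma_pos_of_pos hq
    have := Gamma_pos_of_pos (add_pos hp hq)
    positivity

lemma integral_Ioo_rpow_div_Gamma_mul_sub_rpow_neg {μ p Y : ℝ} (hμ1 : μ < 1) (hp : 0 < p)
    (hY : 0 < Y) :
    ∫ u in Ioo 0 Y, p * u ^ (p - 1) / Gamma (p + 1) * (Y - u) ^ (-μ)
      = Gamma (1 - μ) * Y ^ (p - μ) / Gamma (p - μ + 1) := by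
  have hΓp : Gamma p ≠ 0 := (Gamma_pos_of_pos hp).ne'
  have hΓpμ : Gamma (p - μ + 1) ≠ 0 := (Gamma_pos_of_pos (by linarith)).ne'
  calc ∫ u in Ioo 0 Y, p * u ^ (p - 1) / Gamma (p + 1) * (Y - u) ^ (-μ)
      = p / Gamma (p + 1) * ∫ u in Ioo 0 Y, u ^ (p - 1) * (Y - u) ^ (1 - μ - 1) := by
        rw [← integral_const_mul, sub_sub_cancel_left]
        congr 1 with u
        ring
    _ = Gamma (1 - μ) * Y ^ (p - μ) / Gamma (p - μ + 1) := by
        rw [integral_Ioo_rpow_mul_sub_rpow hp (by linarith) hY, Gamma_add_one hp.ne',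
          show p + (1 - μ) - 1 = p - μ by ring, show p + (1 - μ) = p - μ + 1 by ring]
        field_simp

lemma hasSum_integral_Ioo_mittagLeffler_deriv_mul_sub_rpow_neg {μ : ℝ} (hμ : 0 < μ)
    (hμ1 : μ < 1) (c : ℝ) {Y : ℝ} (hY : 0 < Y) :
    HasSum (fun k : ℕ ↦ ∫ u in Ioo 0 Y,
        c ^ k * (μ * k) * u ^ (μ * k - 1) / Gamma (μ * k + 1) * (Y - u) ^ (-μ))
      (Gamma (1 - μ) * c * mittagLeffler μ (c * Y ^ μ)) := by
  rw [← hasSum_nat_add_iff' 1]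
  simp only [Finset.range_one, Finset.sum_singleton, CharP.cast_eq_zero, mul_zero, zero_mul,
    zero_div, integral_zero, sub_zero]
  have hterm (k : ℕ) :
      ∫ u in Ioo 0 Y, c ^ (k + 1) * (μ * ↑(k + 1)) * u ^ (μ * ↑(k + 1) - 1)
          / Gamma (μ * ↑(k + 1) + 1) * (Y - u) ^ (-μ)
        = Gamma (1 - μ) * c * ((c * Y ^ μ) ^ k / Gamma (μ * k + 1)) := by
    have hp : 0 < μ * ↑(k + 1) := by positivity
    calc _ = c ^ (k + 1) * ∫ u in Ioo 0 Y, μ * ↑(k + 1) * u ^ (μ * ↑(k + 1) - 1)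
            / Gamma (μ * ↑(k + 1) + 1) * (Y - u) ^ (-μ) := by
          rw [← integral_const_mul]
          congr 1 with u
          ring
      _ = _ := by
          rw [integral_Ioo_rpow_div_Gamma_mul_sub_rpow_neg hμ1 hp hY, mul_pow,
            ← rpow_natCast (Y ^ μ), ← rpow_mul hY.le]
          push_cast
          rw [show μ * (k + 1) - μ = μ * k by ring]
          ring
  rw [funext hterm]
  exact (summable_pow_div_Gamma_mul_add_one hμ (c * Y ^ μ)).hasSum.mul_left _

lemma integral_Ioo_mittagLeffler_deriv_mul_sub_rpow_neg {μ : ℝ} (hμ : 0 < μ) (hμ1 : μ < 1)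
    (c : ℝ) {Y : ℝ} (hY : 0 < Y) :
    ∫ u in Ioo 0 Y,
        (∑' k : ℕ, c ^ k * (μ * k) * u ^ (μ * k - 1) / Gamma (μ * k + 1)) * (Y - u) ^ (-μ)
      = Gamma (1 - μ) * c * mittagLeffler μ (c * Y ^ μ) := by
  have hint (k : ℕ) : IntegrableOn
      (fun u ↦ c ^ k * (μ * k) * u ^ (μ * k - 1) / Gamma (μ * k + 1) * (Y - u) ^ (-μ))
      (Ioo 0 Y) := by
    rcases k.eq_zero_or_pos with rfl | hk
    · simp
    · refine IntegrableOn.congr_fun ((integrableOn_Ioo_rpow_mul_sub_rpow (p := μ * k)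
        (by positivity) (by linarith : 0 < 1 - μ) hY).const_mul
          (c ^ k * (μ * k) / Gamma (μ * k + 1)))
        (fun u _ ↦ by simp only [sub_sub_cancel_left]; ring) measurableSet_Ioo
  have hnorm (k : ℕ) :
      ∫ u in Ioo 0 Y,
          ‖c ^ k * (μ * k) * u ^ (μ * k - 1) / Gamma (μ * k + 1) * (Y - u) ^ (-μ)‖
        = ∫ u in Ioo 0 Y,
            |c| ^ k * (μ * k) * u ^ (μ * k - 1) / Gamma (μ * k + 1) * (Y - u) ^ (-μ) := by
    refine setIntegral_congr_fun measurableSet_Ioo fun u hu ↦ ?_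
    have hΓ : 0 < Gamma (μ * k + 1) := Gamma_pos_of_pos (by positivity)
    have hYu : 0 < Y - u := sub_pos.2 hu.2
    simp only [Real.norm_eq_abs, abs_mul, abs_div, abs_pow, abs_of_pos hΓ,
      abs_of_nonneg (by positivity : (0 : ℝ) ≤ μ * k),
      abs_of_nonneg (rpow_nonneg hu.1.le _), abs_of_nonneg (rpow_nonneg hYu.le _)]
  have hsum := hasSum_integral_of_summable_integral_norm hint
    (by simpa only [hnorm] using
      (hasSum_integral_Ioo_mittagLeffler_deriv_mul_sub_rpow_neg hμ hμ1 |c| hY).summable)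
  simp only [← tsum_mul_right] at hsum ⊢
  exact hsum.unique (hasSum_integral_Ioo_mittagLeffler_deriv_mul_sub_rpow_neg hμ hμ1 c hY)

lemma hasDerivAt_one_sub_exp_neg_mul (β τ : ℝ) :
    HasDerivAt (fun s ↦ 1 - exp (-β * s)) (β * exp (-β * τ)) τ := by
  simpa [mul_comm] using (((hasDerivAt_id τ).const_mul (-β)).exp.const_sub 1)

lemma integral_Ioo_comp_one_sub_exp_neg_mul {E : Type*} [NormedAddCommGroup E]
    [NormedSpace ℝ E] {β : ℝ} (hβ : 0 < β) (t : ℝ) (g : ℝ → E) :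
    ∫ τ in Ioo 0 t, (β * exp (-β * τ)) • g (1 - exp (-β * τ))
      = ∫ u in Ioo 0 (1 - exp (-β * t)), g u := by
  have hmono : StrictMono fun s ↦ 1 - exp (-β * s) := fun a b hab ↦
    sub_lt_sub_left (exp_lt_exp.2 (by nlinarith)) 1
  have himage : (fun s ↦ 1 - exp (-β * s)) '' Ioo 0 t = Ioo 0 (1 - exp (-β * t)) := by
    rw [(by fun_prop : Continuous fun s ↦ 1 - exp (-β * s)).image_Ioo_of_strictMono hmono]
    simp
  rw [← himage, integral_image_eq_integral_deriv_smul_of_monotoneOn measurableSet_Ioo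
    (fun τ _ ↦ (hasDerivAt_one_sub_exp_neg_mul β τ).hasDerivWithinAt)
    (hmono.monotone.monotoneOn _)]

theorem generalizedGompertz_solves_fractional_equation_general
    (μ α β N₀ : ℝ) (hμ : 0 < μ) (hμ1 : μ < 1) (hβ : 0 < β)
    (N : ℝ → ℝ)
    (hN : ∀ t : ℝ, N t = N₀ * mittagLeffler μ ((α / β ^ μ) * (1 - Real.exp (-β * t)) ^ μ)) :
    N 0 = N₀ ∧
    (∀ t > (0 : ℝ), DifferentiableAt ℝ N t) ∧
    (∀ t > (0 : ℝ),
      (1 / Real.Gamma (1 - μ)) *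
          ∫ τ in Set.Ioo (0 : ℝ) t,
            ((Real.exp (-β * τ) - Real.exp (-β * t)) / β) ^ (-μ) * deriv N τ
        = α * N t) := by
  set c := α / β ^ μ
  set F' : ℝ → ℝ := fun u ↦
    ∑' k : ℕ, c ^ k * (μ * k) * u ^ (μ * k - 1) / Gamma (μ * k + 1)
  have hy_pos {τ : ℝ} (hτ : 0 < τ) : 0 < 1 - exp (-β * τ) :=
    sub_pos.2 (exp_lt_one_iff.2 (by nlinarith))
  have hderiv {τ : ℝ} (hτ : 0 < τ) :
      HasDerivAt N (N₀ * (F' (1 - exp (-β * τ)) * (β * exp (-β * τ)))) τ := by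
    rw [funext hN]
    exact ((hasDerivAt_mittagLeffler_mul_rpow hμ c (hy_pos hτ)).comp
      τ (hasDerivAt_one_sub_exp_neg_mul β τ)).const_mul N₀
  refine ⟨by simp [hN, zero_rpow hμ.ne', mittagLeffler_zero],
    fun t ht ↦ (hderiv ht).differentiableAt, fun t ht ↦ ?_⟩
  set Y := 1 - exp (-β * t)
  have hY : 0 < Y := hy_pos ht
  have hΓ : 0 < Gamma (1 - μ) := Gamma_pos_of_pos (by linarith)
  have hβμ : 0 < β ^ μ := rpow_pos_of_pos hβ μ
  calc 1 / Gamma (1 - μ) * ∫ τ in Ioo 0 t,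
        ((exp (-β * τ) - exp (-β * t)) / β) ^ (-μ) * deriv N τ
      = 1 / Gamma (1 - μ) * (β ^ μ * N₀ * ∫ τ in Ioo 0 t, (β * exp (-β * τ)) •
          (F' (1 - exp (-β * τ)) * (Y - (1 - exp (-β * τ))) ^ (-μ))) := by
        congr 1
        rw [← integral_const_mul]
        refine setIntegral_congr_fun measurableSet_Ioo fun τ hτ ↦ ?_
        have hτt : 0 ≤ exp (-β * τ) - exp (-β * t) :=
          sub_nonneg.2 (exp_le_exp.2 (by nlinarith [hτ.2]))
        rw [(hderiv hτ.1).deriv, div_rpow hτt hβ.le, rpow_neg hβ.le, smul_eq_mul,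
          show Y - (1 - exp (-β * τ)) = exp (-β * τ) - exp (-β * t) by ring]
        field_simp
    _ = 1 / Gamma (1 - μ) *
          (β ^ μ * N₀ * (Gamma (1 - μ) * c * mittagLeffler μ (c * Y ^ μ))) := by
        rw [integral_Ioo_comp_one_sub_exp_neg_mul hβ t fun u ↦ F' u * (Y - u) ^ (-μ),
          integral_Ioo_mittagLeffler_deriv_mul_sub_rpow_neg hμ hμ1 c hY]
    _ = β ^ μ * c * (N₀ * mittagLeffler μ (c * Y ^ μ)) := by field_simp
    _ = α * N t := by rw [hN t, mul_div_cancel₀ α hβμ.ne']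

/-- **The generalized Gompertz law solves the fractional Gompertz equation.**
Let `μ ∈ (0, 1)`, `α ∈ ℝ`, `β > 0` and `N₀ > 0`, and define
`N_μ(t) = N₀·E_μ((α/β^μ)·(1 − exp(−β·t))^μ)`. Then `N_μ(0) = N₀`, `N_μ` is
differentiable on `(0, ∞)`, and for every `t > 0` it satisfies
`(1/Γ(1−μ))·∫_0^t ((exp(−β·τ) − exp(−β·t))/β)^(−μ)·N_μ'(τ) dτ = α·N_μ(t)`. -/
theorem generalizedGompertz_solves_fractional_equation
    (μ α β N₀ : ℝ) (hμ : 0 < μ) (hμ1 : μ < 1) (hβ : 0 < β) (hN₀ : 0 < N₀)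
    (N : ℝ → ℝ)
    (hN : ∀ t : ℝ, N t = N₀ * mittagLeffler μ ((α / β ^ μ) * (1 - Real.exp (-β * t)) ^ μ)) :
    N 0 = N₀ ∧
    (∀ t > (0 : ℝ), DifferentiableAt ℝ N t) ∧
    (∀ t > (0 : ℝ),
      (1 / Real.Gamma (1 - μ)) *
          ∫ τ in Set.Ioo (0 : ℝ) t,
            ((Real.exp (-β * τ) - Real.exp (-β * t)) / β) ^ (-μ) * deriv N τ
        = α * N t) :=
  generalizedGompertz_solves_fractional_equation_general μ α β N₀ hμ hμ1 hβ N hN
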